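/- Let m = 4 and p, q ∈ ℕ. Let W_{p,q,0} denote the set of vertex functions f on C_4^N supported in Σ_{p,q} with A_- f = 0, and let V_{p,q} be the ℂ-linear span of {A_+^k f : k ∈ ℕ, f ∈ W_{p,q,0}}. Then V_{p,q} is invariant under the adjacency operator: for every g ∈ V_{p,q}, A g ∈ V_{p,q}. -/

import Mathlib

open Finset

/-- The standard generator `e_k` of `(ZMod m)^N`: equal to `1` in coordinate `k`,
`0` elsewhere. -/
def eV (N m : ℕ) (k : Fin N) : Fin N → ZMod m :=
  fun j => if j = k then 1 else 0

/-- Adjacency in the Cayley graph `C_m^N`: `v ∼ w` iff `w = v + e_k` or `w = v - e_k`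
for some coordinate `k`. -/
def adj (N m : ℕ) (v w : Fin N → ZMod m) : Prop :=
  ∃ k : Fin N, w = v + eV N m k ∨ w = v - eV N m k

/-- The `k`-th level of a vertex: `d_k(v) = min((v k).val, m - (v k).val)`. -/
def lev (N m : ℕ) (v : Fin N → ZMod m) (k : Fin N) : ℕ :=
  min ((v k).val) (m - (v k).val)

/-- Path distance of a vertex to the origin: `d(v) = Σ_k d_k(v)`. -/
def distO (N m : ℕ) (v : Fin N → ZMod m) : ℕ :=
  ∑ k : Fin N, lev N m v k

open Classical in
/-- Adjacency operator: `(A f)(v) = Σ_{w ∼ v} f(w)`. -/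
noncomputable def Aop (N m : ℕ) [NeZero m] (f : (Fin N → ZMod m) → ℂ) :
    (Fin N → ZMod m) → ℂ :=
  fun v => ∑ w : Fin N → ZMod m, if adj N m v w then f w else 0

open Classical in
/-- Outer adjacency: `(A₊ f)(v) = Σ_{w ∼ v, d(w) < d(v)} f(w)`. -/
noncomputable def Aplus (N m : ℕ) [NeZero m] (f : (Fin N → ZMod m) → ℂ) :
    (Fin N → ZMod m) → ℂ :=
  fun v => ∑ w : Fin N → ZMod m,
    if adj N m v w ∧ distO N m w < distO N m v then f w else 0

open Classical in
/-- Inner adjacency: `(A₋ f)(v) = Σ_{w ∼ v, d(w) > d(v)} f(w)`. -/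
noncomputable def Aminus (N m : ℕ) [NeZero m] (f : (Fin N → ZMod m) → ℂ) :
    (Fin N → ZMod m) → ℂ :=
  fun v => ∑ w : Fin N → ZMod m,
    if adj N m v w ∧ distO N m v < distO N m w then f w else 0

open Classical in
/-- Neutral adjacency: `(A₀ f)(v) = Σ_{w ∼ v, d(w) = d(v)} f(w)`. -/
noncomputable def Azero (N m : ℕ) [NeZero m] (f : (Fin N → ZMod m) → ℂ) :
    (Fin N → ZMod m) → ℂ :=
  fun v => ∑ w : Fin N → ZMod m,
    if adj N m v w ∧ distO N m w = distO N m v then f w else 0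

/-- The `k`-reflection `ṽ_k` of a vertex: negate the `k`-th coordinate. -/
def reflV (N m : ℕ) (k : Fin N) (v : Fin N → ZMod m) : Fin N → ZMod m :=
  Function.update v k (-(v k))

/-- Level-one reflection sum: `(R₁ f)(v) = Σ_{k : d_k(v) = 1} f(ṽ_k)`. -/
noncomputable def R1 (N m : ℕ) (f : (Fin N → ZMod m) → ℂ) :
    (Fin N → ZMod m) → ℂ :=
  fun v => ∑ k ∈ Finset.univ.filter (fun k => lev N m v k = 1), f (reflV N m k v)

/-- Number of coordinates of `v` at level `ℓ`. -/
def cardLev (N m : ℕ) (v : Fin N → ZMod m) (ℓ : ℕ) : ℕ :=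
  (Finset.univ.filter (fun k => lev N m v k = ℓ)).card

/-- `W_{p,q,0}`: vertex functions supported in `Σ_{p,q}` in the kernel of `A₋`. -/
def Wpq (N p q : ℕ) : Set ((Fin N → ZMod 4) → ℂ) :=
  {f | (∀ v, ¬(cardLev N 4 v 1 = p ∧ cardLev N 4 v 2 = q) → f v = 0) ∧
       Aminus N 4 f = 0}

/-- `V_{p,q}`: the span of `{A₊^k f : k ∈ ℕ, f ∈ W_{p,q,0}}`. -/
noncomputable def Vpq (N p q : ℕ) : Submodule ℂ ((Fin N → ZMod 4) → ℂ) :=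
  Submodule.span ℂ {g | ∃ k : ℕ, ∃ f ∈ Wpq N p q, g = (Aplus N 4)^[k] f}

/-!
On `C_4` every edge changes the distance to the origin by exactly one, so `A = A₊ + A₋`.
The operators `A₊`, `A₋` and the diagonal operator `H v = 2 (N - d(v))` are each a sum over
the coordinates of one `4 × 4` matrix acting on that coordinate alone. Operators acting on
different coordinates commute, so the relations `[A₋, A₊] = H`, `[H, A₋] = 2 A₋` and
`[H, A₊] = -2 A₊` reduce to identities between `4 × 4` integer matrices. Thus `(H, A₋, A₊)`
is an `sl₂`-triple and every nonzero `f ∈ W_{p,q,0}` is a primitive vector of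
weight `2 (N - p - 2q)`, so `A₋ A₊^(k+1) f` is a multiple of `A₊^k f` and `A = A₊ + A₋`
maps the span of the `A₊^k f` into itself.
-/

open Function

-- Mathlib does not make the commutator Lie ring structure of `Module.End` a global instance.
attribute [local instance] LieRing.ofAssociativeRing

namespace IsSl2Triple.HasPrimitiveVectorWith

variable {R L M : Type*} [CommRing R] [LieRing L] [LieAlgebra R L]
  [AddCommGroup M] [Module R M] [LieRingModule L M] [LieModule R L M]
  {h e f : L} {t : IsSl2Triple h e f} {m : M} {μ : R}

open LieModule in
theorem lie_add_pow_toEnd_f_mem_span (P : t.HasPrimitiveVectorWith m μ) (n : ℕ) :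
    ⁅e + f, (toEnd R L M f ^ n) m⁆ ∈
      Submodule.span R (Set.range fun k : ℕ => (toEnd R L M f ^ k) m) := by
  rw [add_lie, P.lie_f_pow_toEnd_f]
  refine add_mem ?_ (Submodule.subset_span ⟨n + 1, rfl⟩)
  cases n with
  | zero => simp [P.lie_e]
  | succ n =>
    rw [P.lie_e_pow_succ_toEnd_f]
    exact Submodule.smul_mem _ _ (Submodule.subset_span ⟨n, rfl⟩)

end IsSl2Triple.HasPrimitiveVectorWith

section CoordOp

variable {ι α R : Type*} [Fintype ι] [DecidableEq ι] [Fintype α] [DecidableEq α] [CommRing R]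

def coordOp (k : ι) : Matrix α α ℤ →+ Module.End R ((ι → α) → R) where
  toFun c :=
    { toFun := fun g v => ∑ a, (c (v k) a : R) * g (update v k a)
      map_add' := fun g g' => by ext v; simp [mul_add, sum_add_distrib]
      map_smul' := fun r g => by ext v; simp [mul_sum, mul_left_comm] }
  map_zero' := by ext; simp
  map_add' c c' := by ext; simp [add_mul, sum_add_distrib]

@[simp]
theorem coordOp_apply (k : ι) (c : Matrix α α ℤ) (g : (ι → α) → R) (v : ι → α) :
    coordOp k c g v = ∑ a, (c (v k) a : R) * g (update v k a) := rfl

theorem coordOp_mul_coordOp (k : ι) (c c' : Matrix α α ℤ) :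
    (coordOp k c * coordOp k c' : Module.End R ((ι → α) → R)) = coordOp k (c * c') := by
  refine LinearMap.ext fun g => funext fun v => ?_
  simp only [Module.End.mul_apply, coordOp_apply, update_self, update_idem, Matrix.mul_apply,
    Int.cast_sum, Int.cast_mul, mul_sum, sum_mul]
  rw [sum_comm]
  exact sum_congr rfl fun _ _ => sum_congr rfl fun _ _ => by ring

theorem commute_coordOp {k j : ι} (hkj : k ≠ j) (c c' : Matrix α α ℤ) :
    Commute (coordOp k c : Module.End R ((ι → α) → R)) (coordOp j c') := by
  refine LinearMap.ext fun g => funext fun v => ?_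
  simp only [Module.End.mul_apply, coordOp_apply, update_of_ne hkj, update_of_ne hkj.symm,
    mul_sum]
  rw [sum_comm]
  exact sum_congr rfl fun _ _ => sum_congr rfl fun _ _ => by rw [update_comm hkj]; ring

def sumCoordOp : Matrix α α ℤ →+ Module.End R ((ι → α) → R) := ∑ k, coordOp k

theorem sumCoordOp_apply (c : Matrix α α ℤ) (g : (ι → α) → R) (v : ι → α) :
    sumCoordOp c g v = ∑ k, ∑ a, (c (v k) a : R) * g (update v k a) := by
  simp [sumCoordOp, AddMonoidHom.finsetSum_apply]

theorem lie_sumCoordOp (c c' : Matrix α α ℤ) :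
    ⁅(sumCoordOp c : Module.End R ((ι → α) → R)), (sumCoordOp c' : Module.End R _)⁆ =
      (sumCoordOp ⁅c, c'⁆ : Module.End R ((ι → α) → R)) := by
  simp only [sumCoordOp, AddMonoidHom.finsetSum_apply, Ring.lie_def, sum_mul_sum]
  rw [sum_comm (f := fun i j => (coordOp i c' * coordOp j c : Module.End R _)),
    ← sum_sub_distrib]
  refine sum_congr rfl fun k _ => ?_
  rw [← sum_sub_distrib,
    sum_eq_single k (fun j _ hjk => sub_eq_zero.2 (commute_coordOp hjk.symm c c').eq) (by simp),
    map_sub, coordOp_mul_coordOp, coordOp_mul_coordOp]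

theorem sumCoordOp_diagonal_apply (d : α → ℤ) (g : (ι → α) → R) (v : ι → α) :
    sumCoordOp (Matrix.diagonal d) g v = (∑ k, (d (v k) : R)) * g v := by
  simp [sumCoordOp_apply, Matrix.diagonal_apply, sum_mul]

def Matrix.ofRel (r : α → α → Prop) [DecidableRel r] : Matrix α α ℤ :=
  Matrix.of fun x a => if r x a then 1 else 0

theorem sumCoordOp_ofRel_apply (r : α → α → Prop) [DecidableRel r] (hr : ∀ x, ¬ r x x)
    (P : (ι → α) → Prop) [DecidablePred P] (v : ι → α)
    (hP : ∀ w, P w ↔ ∃ k a, r (v k) a ∧ w = update v k a) (g : (ι → α) → R) :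
    sumCoordOp (Matrix.ofRel r) g v = ∑ w, if P w then g w else 0 := by
  have hinj : Set.InjOn (fun ka : ι × α => update v ka.1 ka.2) {ka | r (v ka.1) ka.2} := by
    rintro ⟨k, a⟩ hka ⟨j, b⟩ - heq
    have hk := congrFun heq k
    by_cases hkj : k = j
    · subst hkj
      simp_all
    · simp only [update_self, update_of_ne hkj] at hk
      exact absurd (hk ▸ hka) (hr _)
  have himage : univ.filter P =
      (univ.filter fun ka : ι × α => r (v ka.1) ka.2).image fun ka => update v ka.1 ka.2 := by
    ext w
    simp [hP, eq_comm]
  rw [← sum_filter, himage, sum_image (by simpa using hinj), sum_filter, sumCoordOp_apply,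
    ← univ_product_univ, sum_product]
  simp [Matrix.ofRel]

end CoordOp

variable {N : ℕ}

theorem add_eV {m : ℕ} (v : Fin N → ZMod m) (k : Fin N) :
    v + eV N m k = update v k (v k + 1) := by
  ext j
  by_cases h : j = k <;> simp [eV, h]

theorem sub_eV {m : ℕ} (v : Fin N → ZMod m) (k : Fin N) :
    v - eV N m k = update v k (v k - 1) := by
  ext j
  by_cases h : j = k <;> simp [eV, h]

theorem adj_iff_exists_update {m : ℕ} {v w : Fin N → ZMod m} :
    adj N m v w ↔ ∃ k a, (a = v k + 1 ∨ a = v k - 1) ∧ w = update v k a := by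
  simp only [adj, add_eV, sub_eV]
  constructor
  · rintro ⟨k, rfl | rfl⟩
    exacts [⟨k, _, Or.inl rfl, rfl⟩, ⟨k, _, Or.inr rfl, rfl⟩]
  · rintro ⟨k, a, rfl | rfl, rfl⟩
    exacts [⟨k, Or.inl rfl⟩, ⟨k, Or.inr rfl⟩]

namespace CycleFour

def cycleLevel (x : ZMod 4) : ℕ := min x.val (4 - x.val)

def cycleAdj (x a : ZMod 4) : Prop := a = x + 1 ∨ a = x - 1

def stepDown (x a : ZMod 4) : Prop := cycleAdj x a ∧ cycleLevel a < cycleLevel x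

def stepUp (x a : ZMod 4) : Prop := cycleAdj x a ∧ cycleLevel x < cycleLevel a

def weight (x : ZMod 4) : ℤ := 2 - 2 * cycleLevel x

instance : DecidableRel cycleAdj := fun _ _ => inferInstanceAs (Decidable (_ ∨ _))
instance : DecidableRel stepDown := fun _ _ => inferInstanceAs (Decidable (_ ∧ _))
instance : DecidableRel stepUp := fun _ _ => inferInstanceAs (Decidable (_ ∧ _))

theorem lie_ofRel_stepUp_stepDown :
    ⁅Matrix.ofRel stepUp, Matrix.ofRel stepDown⁆ = Matrix.diagonal weight := by decide

theorem lie_diagonal_weight_stepUp :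
    ⁅Matrix.diagonal weight, Matrix.ofRel stepUp⁆ = 2 • Matrix.ofRel stepUp := by decide

theorem lie_diagonal_weight_stepDown :
    ⁅Matrix.diagonal weight, Matrix.ofRel stepDown⁆ = -(2 • Matrix.ofRel stepDown) := by
  decide

theorem ofRel_cycleAdj :
    Matrix.ofRel cycleAdj = Matrix.ofRel stepDown + Matrix.ofRel stepUp := by
  decide

theorem lev_eq_cycleLevel (v : Fin N → ZMod 4) (k : Fin N) : lev N 4 v k = cycleLevel (v k) :=
  rfl

theorem distO_update_add (v : Fin N → ZMod 4) (k : Fin N) (a : ZMod 4) :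
    distO N 4 (update v k a) + cycleLevel (v k) = distO N 4 v + cycleLevel a := by
  have hsplit (w : Fin N → ZMod 4) :
      distO N 4 w = cycleLevel (w k) + ∑ j ∈ univ.erase k, cycleLevel (w j) :=
    (add_sum_erase _ _ (mem_univ k)).symm
  rw [hsplit, hsplit v, update_self,
    sum_congr rfl fun j hj => by rw [update_of_ne (ne_of_mem_erase hj)]]
  ring

theorem adj_and_distO_lt_iff {v w : Fin N → ZMod 4} :
    adj N 4 v w ∧ distO N 4 w < distO N 4 v ↔
      ∃ k a, stepDown (v k) a ∧ w = update v k a := by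
  rw [adj_iff_exists_update]
  constructor
  · rintro ⟨⟨k, a, ha, rfl⟩, hd⟩
    exact ⟨k, a, ⟨ha, by have := distO_update_add v k a; omega⟩, rfl⟩
  · rintro ⟨k, a, ⟨ha, hl⟩, rfl⟩
    exact ⟨⟨k, a, ha, rfl⟩, by have := distO_update_add v k a; omega⟩

theorem adj_and_distO_gt_iff {v w : Fin N → ZMod 4} :
    adj N 4 v w ∧ distO N 4 v < distO N 4 w ↔
      ∃ k a, stepUp (v k) a ∧ w = update v k a := by
  rw [adj_iff_exists_update]
  constructor
  · rintro ⟨⟨k, a, ha, rfl⟩, hd⟩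
    exact ⟨k, a, ⟨ha, by have := distO_update_add v k a; omega⟩, rfl⟩
  · rintro ⟨k, a, ⟨ha, hl⟩, rfl⟩
    exact ⟨⟨k, a, ha, rfl⟩, by have := distO_update_add v k a; omega⟩

theorem cycleAdj_irrefl : ∀ x, ¬ cycleAdj x x := by decide

theorem Aop_eq_sumCoordOp :
    Aop N 4 =
      ⇑(sumCoordOp (Matrix.ofRel cycleAdj) : Module.End ℂ ((Fin N → ZMod 4) → ℂ)) := by
  classical
  ext f v
  rw [sumCoordOp_ofRel_apply _ cycleAdj_irrefl _ v fun _ => adj_iff_exists_update, Aop]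

theorem Aplus_eq_sumCoordOp :
    Aplus N 4 =
      ⇑(sumCoordOp (Matrix.ofRel stepDown) : Module.End ℂ ((Fin N → ZMod 4) → ℂ)) := by
  classical
  ext f v
  rw [sumCoordOp_ofRel_apply _ (fun x h => cycleAdj_irrefl x h.1) _ v
    fun _ => adj_and_distO_lt_iff, Aplus]

theorem Aminus_eq_sumCoordOp :
    Aminus N 4 =
      ⇑(sumCoordOp (Matrix.ofRel stepUp) : Module.End ℂ ((Fin N → ZMod 4) → ℂ)) := by
  classical
  ext f v
  rw [sumCoordOp_ofRel_apply _ (fun x h => cycleAdj_irrefl x h.1) _ v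
    fun _ => adj_and_distO_gt_iff, Aminus]

theorem isSl2Triple_sumCoordOp_cycleFour {ι R : Type*} [Fintype ι] [DecidableEq ι] [Nonempty ι]
    [CommRing R] [CharZero R] :
    IsSl2Triple (sumCoordOp (Matrix.diagonal weight) : Module.End R ((ι → ZMod 4) → R))
      (sumCoordOp (Matrix.ofRel stepUp)) (sumCoordOp (Matrix.ofRel stepDown)) where
  h_ne_zero h0 := by
    have h0' := congr_arg (fun H : Module.End R _ => H (fun _ => 1) 0) h0
    have hcard : ((Fintype.card ι * 2 : ℕ) : R) = 0 := by
      simpa [sumCoordOp_diagonal_apply, weight, cycleLevel] using h0'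
    have := Nat.cast_eq_zero.1 hcard
    exact Fintype.card_ne_zero (α := ι) (by omega)
  lie_e_f := by rw [lie_sumCoordOp, lie_ofRel_stepUp_stepDown]
  lie_h_e_nsmul := by rw [lie_sumCoordOp, lie_diagonal_weight_stepUp, map_nsmul]
  lie_h_f_nsmul := by rw [lie_sumCoordOp, lie_diagonal_weight_stepDown, map_neg, map_nsmul]

theorem distO_eq_of_cardLev {p q : ℕ} {v : Fin N → ZMod 4} (h1 : cardLev N 4 v 1 = p)
    (h2 : cardLev N 4 v 2 = q) : distO N 4 v = p + 2 * q := by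
  have hlevel : ∀ x : ZMod 4, cycleLevel x =
      (if cycleLevel x = 1 then 1 else 0) + 2 * (if cycleLevel x = 2 then 1 else 0) := by decide
  rw [← h1, ← h2, distO, sum_congr rfl fun k _ => lev_eq_cycleLevel v k,
    sum_congr rfl fun k _ => hlevel (v k), sum_add_distrib, ← mul_sum, sum_boole, sum_boole]
  rfl

theorem sum_weight_eq_sub_distO (v : Fin N → ZMod 4) :
    ∑ k, (weight (v k) : ℂ) = 2 * N - 2 * distO N 4 v := by
  have hweight (x : ZMod 4) : (weight x : ℂ) = 2 - 2 * cycleLevel x := by simp [weight]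
  simp only [hweight, sum_sub_distrib, sum_const, card_univ, Fintype.card_fin, nsmul_eq_mul,
    ← mul_sum, distO, lev_eq_cycleLevel, Nat.cast_sum]
  ring

theorem hasPrimitiveVectorWith_of_mem_Wpq {p q : ℕ} [Nonempty (Fin N)]
    {f : (Fin N → ZMod 4) → ℂ} (hf : f ∈ Wpq N p q) (hf0 : f ≠ 0) :
    (isSl2Triple_sumCoordOp_cycleFour (R := ℂ) (ι := Fin N)).HasPrimitiveVectorWith f
      (2 * N - 2 * p - 4 * q : ℂ) where
  ne_zero := hf0
  lie_h := by
    ext v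
    rw [Module.End.lie_apply, sumCoordOp_diagonal_apply, sum_weight_eq_sub_distO, Pi.smul_apply,
      smul_eq_mul]
    by_cases hv : cardLev N 4 v 1 = p ∧ cardLev N 4 v 2 = q
    · rw [distO_eq_of_cardLev hv.1 hv.2]
      push_cast
      ring
    · simp [hf.1 v hv]
  lie_e := by rw [Module.End.lie_apply, ← Aminus_eq_sumCoordOp, hf.2]

end CycleFour

open CycleFour

/-- `V_{p,q}` is invariant under the adjacency operator on `C_4^N`. -/
theorem adjacency_invariant_C4 (N p q : ℕ) (hN : 1 ≤ N) :
    ∀ g ∈ Vpq N p q, Aop N 4 g ∈ Vpq N p q := by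
  have : Nonempty (Fin N) := ⟨⟨0, hN⟩⟩
  rw [Aop_eq_sumCoordOp, ofRel_cycleAdj, map_add, add_comm]
  change Vpq N p q ≤ (Vpq N p q).comap _
  refine Submodule.span_le.2 ?_
  rintro _ ⟨k, f, hf, rfl⟩
  rw [Aplus_eq_sumCoordOp, ← Module.End.coe_pow]
  obtain rfl | hf0 := eq_or_ne f 0
  · simp
  have hspan := (hasPrimitiveVectorWith_of_mem_Wpq hf hf0).lie_add_pow_toEnd_f_mem_span k
  simp only [LieModule.toEnd_module_end, LieHom.id_apply, Module.End.lie_apply] at hspan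
  refine Submodule.span_mono ?_ hspan
  rintro _ ⟨j, rfl⟩
  exact ⟨j, f, hf, by rw [Aplus_eq_sumCoordOp]; exact Module.End.pow_apply _ _ _⟩
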